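/- Let (G,d) be a metric space, 𝔛 a Banach space, p ∈ [1,∞), and f : G → 𝔛 a 1-Lipschitz map. Let X ⊆ G be a finite subset, K a Markov transition kernel on X reversible with respect to a probability measure π on X. Suppose there exist l > 0 and c ∈ (0,1) such that Σ_{u,v ∈ X, d(u,v) ≥ l} d(u,v)^p π(u)π(v) ≥ c · Σ_{u,v ∈ X} d(u,v)^p π(u)π(v) > 0, and let λ > 0 be such that λ · Σ_{u,v ∈ X} ‖h(u)−h(v)‖^p π(u)π(v) ≤ Σ_{u,v ∈ X} ‖h(u)−h(v)‖^p K(u,v)π(u) for every function h : X → 𝔛. Then the compression function of f satisfies ρ_f(l) ≤ diam_d(X) · ( (1/λ) · (Σ_{u,v ∈ X} ‖f(u)−f(v)‖^p K(u,v)π(u)) / (c · Σ_{u,v ∈ X} d(u,v)^p π(u)π(v)) )^{1/p}. -/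

import Mathlib

open scoped BigOperators

noncomputable section

/-- The compression function of a map from a metric space to a normed space. -/
def compressionFn {G : Type*} [PseudoMetricSpace G] {E : Type*} [AddGroup E] [Norm E]
    (f : G → E) (t : ℝ) : ℝ :=
  sInf {r : ℝ | ∃ x y : G, t ≤ dist x y ∧ r = ‖f x - f y‖}

/-!
Every pair `u, v ∈ X` with `d(u,v) ≥ l` satisfies `ρ_f(l) d(u,v) ≤ diam(X) ‖f u - f v‖`.
Raising to the `p`-th power and summing against `π ⊗ π`, the hypothesis that such pairs carry
a fraction `c` of the `d^p`-energy gives `ρ_f(l)^p c D ≤ diam(X)^p F`, where `D` and `F` are the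
`π ⊗ π`-energies of `d` and of `f`. The Poincaré inequality for `h = f|_X` bounds `F` by the
`K`-energy of `f` divided by `λ`; taking `p`-th roots finishes the proof.
-/

namespace compressionFn

variable {G E : Type*} [PseudoMetricSpace G] [SeminormedAddCommGroup E]

theorem nonneg (f : G → E) (t : ℝ) : 0 ≤ compressionFn f t :=
  Real.sInf_nonneg fun _ ⟨_, _, _, hr⟩ => hr ▸ norm_nonneg _

theorem le_norm_sub (f : G → E) {t : ℝ} {x y : G} (h : t ≤ dist x y) :
    compressionFn f t ≤ ‖f x - f y‖ :=
  csInf_le ⟨0, fun _ ⟨_, _, _, hr⟩ => hr ▸ norm_nonneg _⟩ ⟨x, y, h, rfl⟩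

theorem rpow_mul_dist_rpow_le (f : G → E) {S : Set G} (hS : Bornology.IsBounded S)
    {x y : G} (hx : x ∈ S) (hy : y ∈ S) {p t : ℝ} (hp : 0 ≤ p) (h : t ≤ dist x y) :
    compressionFn f t ^ p * dist x y ^ p ≤ Metric.diam S ^ p * ‖f x - f y‖ ^ p := by
  rw [mul_comm (Metric.diam S ^ p)]
  exact mul_le_mul
    (Real.rpow_le_rpow (nonneg f t) (le_norm_sub f h) hp)
    (Real.rpow_le_rpow dist_nonneg (Metric.dist_le_diam_of_mem hS hx hy) hp)
    (by positivity) (by positivity)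

theorem rpow_mul_sum_far_le (f : G → E) (X : Finset G) (π : X → ℝ) (hπ0 : ∀ u, 0 ≤ π u)
    {p : ℝ} (hp : 0 ≤ p) (t : ℝ) :
    compressionFn f t ^ p * ∑ u : X, ∑ v : X, (if t ≤ dist (u : G) (v : G)
        then dist (u : G) (v : G) ^ p * π u * π v else 0) ≤
      Metric.diam (X : Set G) ^ p *
        ∑ u : X, ∑ v : X, ‖f (u : G) - f (v : G)‖ ^ p * π u * π v := by
  simp only [Finset.mul_sum]
  refine Finset.sum_le_sum fun u _ => Finset.sum_le_sum fun v _ => ?_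
  have hππ : 0 ≤ π u * π v := mul_nonneg (hπ0 u) (hπ0 v)
  split_ifs with h
  · calc compressionFn f t ^ p * (dist (u : G) v ^ p * π u * π v)
        = compressionFn f t ^ p * dist (u : G) v ^ p * (π u * π v) := by ring
      _ ≤ Metric.diam (X : Set G) ^ p * ‖f u - f v‖ ^ p * (π u * π v) :=
        mul_le_mul_of_nonneg_right
          (rpow_mul_dist_rpow_le f X.finite_toSet.isBounded u.2 v.2 hp h) hππ
      _ = Metric.diam (X : Set G) ^ p * (‖f u - f v‖ ^ p * π u * π v) := by ring
  · rw [mul_zero, mul_assoc]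
    exact mul_nonneg (Real.rpow_nonneg Metric.diam_nonneg p)
      (mul_nonneg (Real.rpow_nonneg (norm_nonneg _) p) hππ)

end compressionFn

theorem Real.le_mul_rpow_inv_of_rpow_le {a b Q p : ℝ} (ha : 0 ≤ a) (hb : 0 ≤ b) (hQ : 0 ≤ Q)
    (hp : 0 < p) (h : a ^ p ≤ b ^ p * Q) : a ≤ b * Q ^ p⁻¹ := by
  rw [← Real.rpow_rpow_inv hb hp.ne', ← Real.mul_rpow (by positivity) hQ]
  exact (Real.le_rpow_inv_iff_of_pos ha (by positivity) hp).2 h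

open Classical in
theorem statement13_general
    {G : Type*} [MetricSpace G] {𝔛 : Type*} [NormedAddCommGroup 𝔛] [NormedSpace ℝ 𝔛]
    (p : ℝ) (hp : 1 ≤ p)
    (f : G → 𝔛)
    (X : Finset G) (K : X → X → ℝ) (π : X → ℝ)
    (hπ0 : ∀ u, 0 ≤ π u)
    (l : ℝ) (c : ℝ) (hc : c ∈ Set.Ioo (0 : ℝ) 1)
    (hmasspos : 0 < ∑ u : X, ∑ v : X, dist (u : G) (v : G) ^ p * π u * π v)
    (hmass : c * ∑ u : X, ∑ v : X, dist (u : G) (v : G) ^ p * π u * π v ≤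
      ∑ u : X, ∑ v : X, (if l ≤ dist (u : G) (v : G)
        then dist (u : G) (v : G) ^ p * π u * π v else 0))
    (lam : ℝ) (hlam : 0 < lam)
    (hpoincare : ∀ h : X → 𝔛,
      lam * ∑ u : X, ∑ v : X, ‖h u - h v‖ ^ p * π u * π v ≤
        ∑ u : X, ∑ v : X, ‖h u - h v‖ ^ p * K u v * π u) :
    compressionFn f l ≤
      Metric.diam (X : Set G) *
        ((1 / lam) * (∑ u : X, ∑ v : X, ‖f (u : G) - f (v : G)‖ ^ p * K u v * π u) /
          (c * ∑ u : X, ∑ v : X, dist (u : G) (v : G) ^ p * π u * π v)) ^ (1 / p) := by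
  have hp0 : 0 < p := zero_lt_one.trans_le hp
  set ρ := compressionFn f l
  set δ := Metric.diam (X : Set G)
  set D := ∑ u : X, ∑ v : X, dist (u : G) (v : G) ^ p * π u * π v
  set E := ∑ u : X, ∑ v : X, ‖f (u : G) - f (v : G)‖ ^ p * K u v * π u
  set F := ∑ u : X, ∑ v : X, ‖f (u : G) - f (v : G)‖ ^ p * π u * π v
  have hcD : 0 < c * D := mul_pos hc.1 hmasspos
  have hF0 : 0 ≤ F := Finset.sum_nonneg fun u _ => Finset.sum_nonneg fun v _ =>
    mul_nonneg (mul_nonneg (Real.rpow_nonneg (norm_nonneg _) p) (hπ0 u)) (hπ0 v)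
  have hFE : lam * F ≤ E := hpoincare fun u => f u
  have hfar : ρ ^ p * (c * D) ≤ δ ^ p * F :=
    (mul_le_mul_of_nonneg_left hmass (Real.rpow_nonneg (compressionFn.nonneg f l) p)).trans
      (compressionFn.rpow_mul_sum_far_le f X π hπ0 hp0.le l)
  rw [one_div p]
  refine Real.le_mul_rpow_inv_of_rpow_le (compressionFn.nonneg f l) Metric.diam_nonneg
    (div_nonneg (mul_nonneg (by positivity) ((mul_nonneg hlam.le hF0).trans hFE)) hcD.le) hp0 ?_
  rw [mul_div_assoc', le_div_iff₀ hcD, one_div, ← div_eq_inv_mul, mul_div_assoc', le_div_iff₀ hlam]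
  calc ρ ^ p * (c * D) * lam
      ≤ δ ^ p * F * lam := by gcongr
    _ = δ ^ p * (lam * F) := by ring
    _ ≤ δ ^ p * E := by gcongr

open Classical in
theorem statement13
    {G : Type*} [MetricSpace G] {𝔛 : Type*} [NormedAddCommGroup 𝔛] [NormedSpace ℝ 𝔛]
    (p : ℝ) (hp : 1 ≤ p)
    (f : G → 𝔛) (hf : ∀ x y : G, ‖f x - f y‖ ≤ dist x y)
    (X : Finset G) (K : X → X → ℝ) (π : X → ℝ)
    (hK0 : ∀ u v, 0 ≤ K u v) (hK1 : ∀ u, ∑ v : X, K u v = 1)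
    (hπ0 : ∀ u, 0 ≤ π u) (hπ1 : ∑ u : X, π u = 1)
    (hrev : ∀ u v, π u * K u v = π v * K v u)
    (l : ℝ) (hl : 0 < l) (c : ℝ) (hc : c ∈ Set.Ioo (0 : ℝ) 1)
    (hmasspos : 0 < ∑ u : X, ∑ v : X, dist (u : G) (v : G) ^ p * π u * π v)
    (hmass : c * ∑ u : X, ∑ v : X, dist (u : G) (v : G) ^ p * π u * π v ≤
      ∑ u : X, ∑ v : X, (if l ≤ dist (u : G) (v : G)
        then dist (u : G) (v : G) ^ p * π u * π v else 0))
    (lam : ℝ) (hlam : 0 < lam)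
    (hpoincare : ∀ h : X → 𝔛,
      lam * ∑ u : X, ∑ v : X, ‖h u - h v‖ ^ p * π u * π v ≤
        ∑ u : X, ∑ v : X, ‖h u - h v‖ ^ p * K u v * π u) :
    compressionFn f l ≤
      Metric.diam (X : Set G) *
        ((1 / lam) * (∑ u : X, ∑ v : X, ‖f (u : G) - f (v : G)‖ ^ p * K u v * π u) /
          (c * ∑ u : X, ∑ v : X, dist (u : G) (v : G) ^ p * π u * π v)) ^ (1 / p) :=
  statement13_general p hp f X K π hπ0 l c hc hmasspos hmass lam hlam hpoincare
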